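/- arXiv:1009.0300 — 6 statements merged into one kernel-verified Lean document; each statement's English description precedes it below -/
import Mathlib

section
/- For an election with n voters, the candidates with the highest Maximin score are exactly the candidates with the lowest insertion score. -/
/-!
Let `m` be the Maximin score of `c` among `n` voters. Adding `k` voters who all rank `c` first
raises every pairwise count of `c` by `k`, and no `k` voters can do more, so `c` becomes the
Condorcet winner exactly when `n + k < 2 (m + k)`. Hence the insertion score of `c` is
`n + 1 - 2 m` (truncated at `0`), an antitone function of `m`. It is strictly antitone except
where it is truncated, i.e. where `2 m > n`; but two distinct candidates cannot both satisfy this,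
because the numbers of voters preferring `c` to `c'` and `c'` to `c` add up to `n`.
-/

/-- Number of voters preferring `a` to `b`. -/
noncomputable def countPref {V C : Type*} [Fintype V] (O : V → C → C → Prop) (a b : C) : ℕ :=
  Nat.card {i : V // O i a b}

/-- `c` is a Condorcet winner: a strict majority of voters prefers `c` to every other candidate. -/
def IsCondorcetWinner {V C : Type*} [Fintype V] (O : V → C → C → Prop) (c : C) : Prop :=
  ∀ b : C, b ≠ c → Fintype.card V < 2 * countPref O c b

section Election

variable {V W C : Type*} [Fintype V] [Fintype W]

lemma countPref_le_card (O : V → C → C → Prop) (a b : C) : countPref O a b ≤ Fintype.card V :=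
  Nat.card_eq_fintype_card (α := V) ▸ Finite.card_subtype_le _

lemma countPref_sumElim (O : V → C → C → Prop) (O' : W → C → C → Prop) (a b : C) :
    countPref (Sum.elim O O') a b = countPref O a b + countPref O' a b := by
  rw [countPref, countPref, countPref, ← Nat.card_sum]
  exact Nat.card_congr Equiv.subtypeSum

lemma countPref_add_countPref_swap (O : V → C → C → Prop)
    (hO : ∀ i, IsStrictTotalOrder C (O i)) {a b : C} (hab : a ≠ b) :
    countPref O a b + countPref O b a = Fintype.card V := by
  classical
  have hswap : ∀ i, O i b a ↔ ¬ O i a b := fun i => by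
    have := hO i
    exact ⟨fun hba hab' => asymm hab' hba,
      fun h => ((trichotomous_of (O i) a b).resolve_left h).resolve_left hab⟩
  rw [countPref, countPref, Nat.card_eq_fintype_card, Nat.card_eq_fintype_card,
    Fintype.card_congr (Equiv.subtypeEquivRight hswap), Fintype.card_subtype_compl]
  exact Nat.add_sub_cancel' (Fintype.card_subtype_le _)

def liftToTop (r : C → C → Prop) (c : C) (a b : C) : Prop :=
  b ≠ c ∧ (a = c ∨ r a b)

lemma isStrictTotalOrder_liftToTop (r : C → C → Prop) [IsStrictTotalOrder C r] (c : C) :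
    IsStrictTotalOrder C (liftToTop r c) where
  trichotomous a b hab hba := by
    by_contra hne
    by_cases hac : a = c
    · exact hab ⟨fun hbc => hne (hac.trans hbc.symm), Or.inl hac⟩
    by_cases hbc : b = c
    · exact hba ⟨hac, Or.inl hbc⟩
    rcases trichotomous_of r a b with h | h | h
    exacts [hab ⟨hbc, Or.inr h⟩, hne h, hba ⟨hac, Or.inr h⟩]
  irrefl a := fun ⟨hac, h⟩ => h.elim hac (irrefl a)
  trans _ _ _ := fun ⟨hbc, hab⟩ ⟨hdc, hbd⟩ =>
    ⟨hdc, hab.imp_right (_root_.trans · (hbd.resolve_left hbc))⟩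

lemma countPref_const_liftToTop (k : ℕ) (r : C → C → Prop) {c b : C} (hbc : b ≠ c) :
    countPref (fun _ : Fin k => liftToTop r c) c b = k := by
  rw [countPref, Nat.card_congr (Equiv.subtypeUnivEquiv fun _ => ⟨hbc, Or.inl rfl⟩),
    Nat.card_eq_fintype_card, Fintype.card_fin]

/-- The Maximin score of `c` is the least element of this set. -/
def pairwiseSupports (O : V → C → C → Prop) (c : C) : Set ℕ :=
  {t | ∃ c', c' ≠ c ∧ countPref O c c' = t}

/-- The insertion score of `c` is the least element of this set. -/
def condorcetInsertionSizes (O : V → C → C → Prop) (c : C) : Set ℕ :=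
  {k | ∃ O' : Fin k → C → C → Prop, (∀ j, IsStrictTotalOrder C (O' j)) ∧
    IsCondorcetWinner (Sum.elim O O') c}

lemma add_le_card_of_isLeast_pairwiseSupports (O : V → C → C → Prop)
    (hO : ∀ i, IsStrictTotalOrder C (O i)) {c c' : C} (hne : c ≠ c') {m m' : ℕ}
    (hm : IsLeast (pairwiseSupports O c) m) (hm' : IsLeast (pairwiseSupports O c') m') :
    m + m' ≤ Fintype.card V :=
  countPref_add_countPref_swap O hO hne ▸
    add_le_add (hm.2 ⟨c', hne.symm, rfl⟩) (hm'.2 ⟨c, hne, rfl⟩)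

lemma isLeast_condorcetInsertionSizes (O : V → C → C → Prop) {c : C} {m : ℕ}
    (hm : IsLeast (pairwiseSupports O c) m) :
    IsLeast (condorcetInsertionSizes O c) (Fintype.card V + 1 - 2 * m) := by
  refine ⟨⟨fun _ => liftToTop WellOrderingRel c,
    fun _ => isStrictTotalOrder_liftToTop _ c, fun b hbc => ?_⟩, ?_⟩
  · have hmb : m ≤ countPref O c b := hm.2 ⟨b, hbc, rfl⟩
    rw [countPref_sumElim, countPref_const_liftToTop _ _ hbc, Fintype.card_sum, Fintype.card_fin]
    omega
  · rintro k ⟨O', -, hwin⟩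
    obtain ⟨b, hbc, hbm⟩ := hm.1
    have hwin_b := hwin b hbc
    have hk := countPref_le_card O' c b
    rw [countPref_sumElim, hbm, Fintype.card_sum] at hwin_b
    rw [Fintype.card_fin] at hk hwin_b
    omega

end Election

theorem stmt9_general {C : Type*} [Fintype C] {n : ℕ}
    (O : Fin n → C → C → Prop) (hO : ∀ i, IsStrictTotalOrder C (O i))
    (si sM : C → ℕ)
    (hsi : ∀ c, IsLeast {k : ℕ | ∃ O' : Fin k → C → C → Prop,
      (∀ j, IsStrictTotalOrder C (O' j)) ∧
      IsCondorcetWinner (Sum.elim O O' : Fin n ⊕ Fin k → C → C → Prop) c} (si c))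
    (hsM : ∀ c, IsLeast {t : ℕ | ∃ c' : C, c' ≠ c ∧ countPref O c c' = t} (sM c)) :
    ∀ c : C, (∀ c', sM c' ≤ sM c) ↔ (∀ c', si c ≤ si c') := by
  have hsi_eq : ∀ c, si c = n + 1 - 2 * sM c := fun c => by
    simpa using (hsi c).unique (isLeast_condorcetInsertionSizes O (hsM c))
  have hpair : ∀ c c', c ≠ c' → sM c + sM c' ≤ n := fun c c' hne => by
    simpa using add_le_card_of_isLeast_pairwiseSupports O hO hne (hsM c) (hsM c')
  intro c
  simp only [hsi_eq]
  refine ⟨fun hmax c' => by have := hmax c'; omega, fun hmin c' => ?_⟩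
  rcases eq_or_ne c c' with rfl | hne
  · exact le_rfl
  have := hmin c'
  have := hpair c c' hne
  omega

/-- the candidates with the highest Maximin score are exactly the
candidates with the lowest insertion score. -/
theorem stmt9 {C : Type*} [Fintype C] (hC : 2 ≤ Fintype.card C) {n : ℕ}
    (O : Fin n → C → C → Prop) (hO : ∀ i, IsStrictTotalOrder C (O i))
    (si sM : C → ℕ)
    (hsi : ∀ c, IsLeast {k : ℕ | ∃ O' : Fin k → C → C → Prop,
      (∀ j, IsStrictTotalOrder C (O' j)) ∧
      IsCondorcetWinner (Sum.elim O O' : Fin n ⊕ Fin k → C → C → Prop) c} (si c))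
    (hsM : ∀ c, IsLeast {t : ℕ | ∃ c' : C, c' ≠ c ∧ countPref O c c' = t} (sM c)) :
    ∀ c : C, (∀ c', sM c' ≤ sM c) ↔ (∀ c', si c ≤ si c') :=
  stmt9_general O hO si sM hsi hsM
end

section
/- Let E be an election with n voters, c a candidate, and suppose c can be made the Condorcet winner by deleting a set of k₁ voters and adding a set V'' of k₂ new voters. Then c can be made the Condorcet winner by only adding voters: specifically, c is the Condorcet winner of the election obtained from E by adding the voters in V'' together with k₁ additional voters who rank c first. -/
lemma countPref_sumElim_s10 {A B C : Type*} [Fintype A] [Fintype B]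
    (O₁ : A → C → C → Prop) (O₂ : B → C → C → Prop) (a b : C) :
    countPref (Sum.elim O₁ O₂) a b = countPref O₁ a b + countPref O₂ a b := by
  unfold countPref
  rw [Nat.card_congr (Equiv.subtypeSum (p := fun i => Sum.elim O₁ O₂ i a b)), Nat.card_sum]
  rfl

lemma countPref_subtype_le {V C : Type*} [Fintype V] (p : V → Prop) [Fintype {i // p i}]
    (O : V → C → C → Prop) (a b : C) :
    countPref (fun i : {i // p i} => O i) a b ≤ countPref O a b :=
  Nat.card_le_card_of_injective (fun i => ⟨i.1.1, i.2⟩) fun i j h => by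
    simpa [Subtype.ext_iff] using h

lemma countPref_eq_card_of_forall {V C : Type*} [Fintype V] (O : V → C → C → Prop) {a b : C}
    (h : ∀ i, O i a b) : countPref O a b = Fintype.card V := by
  rw [countPref, Nat.card_congr (Equiv.subtypeUnivEquiv h), Nat.card_eq_fintype_card]

theorem stmt10_general {C : Type*} {n k₁ k₂ : ℕ}
    (O : Fin n → C → C → Prop) (c : C)
    (D : Finset (Fin n)) (hD : D.card = k₁)
    (O'' : Fin k₂ → C → C → Prop)
    (hcw : IsCondorcetWinner
      (Sum.elim (fun i : {i : Fin n // i ∉ D} => O i.1) O''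
        : {i : Fin n // i ∉ D} ⊕ Fin k₂ → C → C → Prop) c)
    (O''' : Fin k₁ → C → C → Prop)
    (htop : ∀ j, ∀ b, b ≠ c → O''' j c b) :
    IsCondorcetWinner
      (Sum.elim O (Sum.elim O'' O''')
        : Fin n ⊕ (Fin k₂ ⊕ Fin k₁) → C → C → Prop) c := by
  intro b hb
  have hmajority := hcw b hb
  have hremaining : Fintype.card {i : Fin n // i ∉ D} = n - k₁ := by simp [hD]
  have hk₁ : k₁ ≤ n := hD ▸ by simpa using D.card_le_univ
  have hdeleted := countPref_subtype_le (· ∉ D) O c b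
  have htop_count := countPref_eq_card_of_forall O''' fun j => htop j b hb
  simp only [countPref_sumElim_s10, Fintype.card_sum, Fintype.card_fin,
    hremaining] at hmajority htop_count ⊢
  omega

/-- if `c` can be made the Condorcet winner by deleting a set `D` of `k₁`
voters and adding `k₂` new voters with profile `O''`, then `c` is the Condorcet winner
of the election obtained from `E` by adding the voters of `O''` together with `k₁`
additional voters who rank `c` first. -/
theorem stmt10 {C : Type*} [Fintype C] {n k₁ k₂ : ℕ}
    (O : Fin n → C → C → Prop) (hO : ∀ i, IsStrictTotalOrder C (O i)) (c : C)
    (D : Finset (Fin n)) (hD : D.card = k₁)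
    (O'' : Fin k₂ → C → C → Prop) (hO'' : ∀ j, IsStrictTotalOrder C (O'' j))
    (hcw : IsCondorcetWinner
      (Sum.elim (fun i : {i : Fin n // i ∉ D} => O i.1) O''
        : {i : Fin n // i ∉ D} ⊕ Fin k₂ → C → C → Prop) c)
    (O''' : Fin k₁ → C → C → Prop) (hO''' : ∀ j, IsStrictTotalOrder C (O''' j))
    (htop : ∀ j, ∀ b, b ≠ c → O''' j c b) :
    IsCondorcetWinner
      (Sum.elim O (Sum.elim O'' O''')
        : Fin n ⊕ (Fin k₂ ⊕ Fin k₁) → C → C → Prop) c :=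
  stmt10_general O c D hD O'' hcw O''' htop
end

section
/- With d̄ and d_d as in the deletion-distance construction, for any two elections E = (V,O), E' = (V',O') over the same candidate set whose profiles agree on V ∩ V': d_d(E,E') < 2 if V ⊆ V' or V' ⊆ V, and d_d(E,E') > 2 otherwise. -/
open scoped ENNReal

/-- An election over candidate set `C`: a finite set of voters (drawn from ℕ) together
with a strict total order on `C` for each voter. -/
def Election (C : Type*) : Type _ :=
  Σ V : Finset ℕ, ({i : ℕ // i ∈ V} → {r : C → C → Prop // IsStrictTotalOrder C r})

/-- The profiles of two elections agree on the common voters. -/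
def Agrees {C : Type*} (E E' : Election C) : Prop :=
  ∀ (i : ℕ) (h : i ∈ E.1) (h' : i ∈ E'.1), E.2 ⟨i, h⟩ = E'.2 ⟨i, h'⟩

open Classical in
/-- The auxiliary function `d̄`: `0` on equal elections, `2 - 1/(k + M² + 1)` when one
voter set strictly contains the other and the profiles agree on the intersection
(with `k` the difference in sizes and `M` the larger size), and `+∞` otherwise. -/
noncomputable def dbar {C : Type*} (E E' : Election C) : ℝ≥0∞ :=
  if E = E' then 0
  else if Agrees E E' ∧ (E.1 ⊂ E'.1 ∨ E'.1 ⊂ E.1) then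
    (2 : ℝ≥0∞) -
      1 / (((max E.1.card E'.1.card - min E.1.card E'.1.card : ℕ) : ℝ≥0∞) +
            ((max E.1.card E'.1.card : ℕ) : ℝ≥0∞) ^ 2 + 1)
  else ⊤

/-- The weight of a chain `x :: l ++ [y]` of elections. -/
noncomputable def chainSum {α : Type*} (w : α → α → ℝ≥0∞) : α → List α → α → ℝ≥0∞
  | x, [], y => w x y
  | x, z :: l, y => w x z + chainSum w z l y

/-- The shortest-path distance induced by the edge-weight function `w`. -/
noncomputable def spDist {α : Type*} (w : α → α → ℝ≥0∞) (x y : α) : ℝ≥0∞ :=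
  ⨅ l : List α, chainSum w x l y

/-
Distinct elections are at `d̄`-distance at least `3/2`, since the denominator `k + M² + 1` is at
least `2` whenever it is used. Hence a chain from `E` to `E'` either collapses to the single edge
`d̄(E, E')` or has two nontrivial edges and weight at least `3`. In the nested case the single edge
has weight `2 - 1/(k + M² + 1) < 2`; otherwise it has weight `∞`, so every chain weighs at least `3`.
-/

section ShortestPath

variable {α : Type*} {w : α → α → ℝ≥0∞}

lemma spDist_le_self (x y : α) : spDist w x y ≤ w x y :=
  iInf_le (fun l => chainSum w x l y) []

lemma min_le_chainSum {c : ℝ≥0∞} (hw_self : ∀ x, w x x = 0)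
    (hw_ne : ∀ x y, x ≠ y → c ≤ w x y) (l : List α) (x y : α) :
    min (w x y) (2 * c) ≤ chainSum w x l y := by
  induction l generalizing x with
  | nil => exact min_le_left _ _
  | cons z l ih =>
    show min (w x y) (2 * c) ≤ w x z + chainSum w z l y
    by_cases hxz : x = z
    · subst hxz
      rw [hw_self, zero_add]
      exact ih x
    by_cases hzy : z = y
    · subst hzy
      exact (min_le_left _ _).trans le_self_add
    have hz : c ≤ chainSum w z l y :=
      (le_min (hw_ne z y hzy) (le_mul_of_one_le_left' one_le_two)).trans (ih z)
    calc min (w x y) (2 * c) ≤ 2 * c := min_le_right _ _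
      _ = c + c := two_mul c
      _ ≤ w x z + chainSum w z l y := add_le_add (hw_ne x z hxz) hz

lemma min_le_spDist {c : ℝ≥0∞} (hw_self : ∀ x, w x x = 0)
    (hw_ne : ∀ x y, x ≠ y → c ≤ w x y) (x y : α) :
    min (w x y) (2 * c) ≤ spDist w x y :=
  le_iInf fun l => min_le_chainSum hw_self hw_ne l x y

end ShortestPath

lemma ENNReal.two_sub_one_div_natCast_lt_two (n : ℕ) : 2 - 1 / (n : ℝ≥0∞) < 2 :=
  ENNReal.sub_lt_self ENNReal.ofNat_ne_top two_ne_zero (by simp)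

lemma ENNReal.three_halves_le_two_sub_one_div_natCast {n : ℕ} (hn : 2 ≤ n) :
    3 / 2 ≤ 2 - 1 / (n : ℝ≥0∞) := by
  have h : 1 / (n : ℝ≥0∞) ≤ 1 / 2 := ENNReal.div_le_div_left (by exact_mod_cast hn) 1
  calc (3 / 2 : ℝ≥0∞) = 2 - 1 / 2 := by
        refine (ENNReal.sub_eq_of_eq_add (by simp) ?_).symm
        rw [ENNReal.div_add_div_same, ENNReal.eq_div_iff two_ne_zero ENNReal.ofNat_ne_top]
        norm_num
    _ ≤ 2 - 1 / (n : ℝ≥0∞) := tsub_le_tsub_left h 2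

namespace Election

variable {C : Type*} {E E' : Election C}

lemma eq_of_agrees (h : E.1 = E'.1) (ha : Agrees E E') : E = E' := by
  obtain ⟨V, f⟩ := E
  obtain ⟨V', f'⟩ := E'
  cases h
  congr 1
  funext i
  exact ha i.1 i.2 i.2

end Election

section Dbar

variable {C : Type*} {E E' : Election C}

lemma dbar_self (E : Election C) : dbar E E = 0 := by simp [dbar]

lemma dbar_of_ssubset (hne : E ≠ E') (ha : Agrees E E') (hs : E.1 ⊂ E'.1 ∨ E'.1 ⊂ E.1) :
    dbar E E' = 2 - 1 / ((max E.1.card E'.1.card - min E.1.card E'.1.card +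
      max E.1.card E'.1.card ^ 2 + 1 : ℕ) : ℝ≥0∞) := by
  simp only [dbar, if_neg hne, if_pos (And.intro ha hs)]
  push_cast
  rfl

lemma dbar_eq_top_of_not_subset (h : ¬(E.1 ⊆ E'.1 ∨ E'.1 ⊆ E.1)) : dbar E E' = ⊤ := by
  have hne : E ≠ E' := by
    rintro rfl
    exact h (Or.inl subset_rfl)
  rw [dbar, if_neg hne, if_neg]
  rintro ⟨-, hs | hs⟩
  exacts [h (Or.inl hs.subset), h (Or.inr hs.subset)]

lemma dbar_lt_two (ha : Agrees E E') (hsub : E.1 ⊆ E'.1 ∨ E'.1 ⊆ E.1) : dbar E E' < 2 := by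
  by_cases heq : E = E'
  · simp [heq, dbar_self]
  have hne : E.1 ≠ E'.1 := fun h => heq (Election.eq_of_agrees h ha)
  have hs : E.1 ⊂ E'.1 ∨ E'.1 ⊂ E.1 :=
    hsub.imp (ssubset_of_ne_of_subset hne) (ssubset_of_ne_of_subset hne.symm)
  rw [dbar_of_ssubset heq ha hs]
  exact ENNReal.two_sub_one_div_natCast_lt_two _

lemma three_halves_le_dbar (hne : E ≠ E') : 3 / 2 ≤ dbar E E' := by
  by_cases hc : Agrees E E' ∧ (E.1 ⊂ E'.1 ∨ E'.1 ⊂ E.1)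
  · rw [dbar_of_ssubset hne hc.1 hc.2]
    apply ENNReal.three_halves_le_two_sub_one_div_natCast
    have hM : 1 ≤ max E.1.card E'.1.card := by
      rcases hc.2 with hs | hs <;> have := Finset.card_lt_card hs <;> omega
    nlinarith
  · rw [dbar, if_neg hne, if_neg hc]
    exact le_top

end Dbar

theorem stmt13_general {C : Type*} (E E' : Election C) (hagree : Agrees E E') :
    (E.1 ⊆ E'.1 ∨ E'.1 ⊆ E.1 → spDist (dbar (C := C)) E E' < 2) ∧
    (¬ (E.1 ⊆ E'.1 ∨ E'.1 ⊆ E.1) → 2 < spDist (dbar (C := C)) E E') := by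
  refine ⟨fun hsub => (spDist_le_self E E').trans_lt (dbar_lt_two hagree hsub), fun hn => ?_⟩
  calc (2 : ℝ≥0∞) < 3 := by norm_num
    _ = min (dbar E E') (2 * (3 / 2)) := by
      rw [dbar_eq_top_of_not_subset hn, min_eq_right le_top,
        ENNReal.mul_div_cancel two_ne_zero ENNReal.ofNat_ne_top]
    _ ≤ spDist dbar E E' := min_le_spDist dbar_self (fun _ _ => three_halves_le_dbar) E E'

/-- for any two elections over the same candidate set whose profiles
agree on the common voters, `d_d(E, E') < 2` if one voter set contains the other, and
`d_d(E, E') > 2` otherwise. -/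
theorem stmt13 {C : Type*} [Fintype C] (E E' : Election C) (hagree : Agrees E E') :
    (E.1 ⊆ E'.1 ∨ E'.1 ⊆ E.1 → spDist (dbar (C := C)) E E' < 2) ∧
    (¬ (E.1 ⊆ E'.1 ∨ E'.1 ⊆ E.1) → 2 < spDist (dbar (C := C)) E E') :=
  stmt13_general E E' hagree
end

section
/- There exists an election in which the set of winners under the voter replacement rule differs from the set of winners under Young's rule. Concretely: in the 4-candidate, 29-voter election with 2 voters a≻b≻c≻d, 2 voters a≻c≻d≻b, 1 voter a≻b≻d≻c, 8 voters b≻c≻a≻d, 8 voters c≻d≻a≻b, and 8 voters d≻b≻a≻c, candidate a is the unique voter-replacement winner (replacement score 3, all others ≥ 4) while candidate b has strictly smaller deletion score than a (s_d(b) = 8 but s_d(a) ≥ 12), so a is not a Young winner. -/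
/-- Candidates `a=0`, `b=1`, `c=2`, `d=3`. The ballot (ranking, best first) of each of
the 29 voters: 2 voters a≻b≻c≻d, 2 voters a≻c≻d≻b, 1 voter a≻b≻d≻c, 8 voters b≻c≻a≻d,
8 voters c≻d≻a≻b, and 8 voters d≻b≻a≻c. -/
def theBallot (i : Fin 29) : List (Fin 4) :=
  if i.val < 2 then [0, 1, 2, 3]
  else if i.val < 4 then [0, 2, 3, 1]
  else if i.val < 5 then [0, 1, 3, 2]
  else if i.val < 13 then [1, 2, 0, 3]
  else if i.val < 21 then [2, 3, 0, 1]
  else [3, 1, 0, 2]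

/-- The preference profile of the 29-voter election: voter `i` prefers `x` to `y` iff
`x` occurs before `y` on voter `i`'s ballot. -/
def theProfile (i : Fin 29) (x y : Fin 4) : Prop :=
  (theBallot i).idxOf x < (theBallot i).idxOf y

/-- `c` becomes the Condorcet winner after changing the votes of at most `k` voters. -/
def ReplacementScoreLE (c : Fin 4) (k : ℕ) : Prop :=
  ∃ O' : Fin 29 → Fin 4 → Fin 4 → Prop,
    (∀ i, IsStrictTotalOrder (Fin 4) (O' i)) ∧
    Nat.card {i : Fin 29 // O' i ≠ theProfile i} ≤ k ∧
    IsCondorcetWinner O' c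

/-- `c` is the Condorcet winner after deleting the voters in `D`. -/
def WinsAfterDeleting (D : Finset (Fin 29)) (c : Fin 4) : Prop :=
  IsCondorcetWinner (fun i : {i : Fin 29 // i ∉ D} => theProfile i.1) c

/-!
Against each rival, `a` is preferred by only 13 of the 29 voters, but each of the three
8-voter blocs ranks `a` third, so moving `a` to the top of one ballot per bloc gains `a` two
pairwise votes per ballot and gives 15 : 14 everywhere. Every other candidate `x` has a rival `y`
that only 11 voters rank below `x`; a changed ballot moves a pairwise count by at most one,
so three changes cannot make `x` win.

Deleting the 8 voters `c ≻ d ≻ a ≻ b` makes `b` the Condorcet winner, and fewer deletions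
cannot suffice since only 11 voters prefer `b` to `d`. Finally every voter ranks `a` above
some rival, so each deleted voter costs `a` a vote in one of its three contests; adding the
three majority conditions forces at least 12 deletions.
-/

open Finset

section CondorcetWinner

variable {V C : Type*} [Fintype V]

theorem countPref_eq_card_filter (O : V → C → C → Prop) (a b : C) [DecidablePred (O · a b)] :
    countPref O a b = #{i | O i a b} := by
  rw [countPref, Nat.card_eq_fintype_card, Fintype.card_subtype]

theorem countPref_le_countPref_add_card_ne (O O' : V → C → C → Prop) (a b : C) :
    countPref O' a b ≤ countPref O a b + Nat.card {i // O' i ≠ O i} := by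
  classical
  rw [countPref_eq_card_filter, countPref_eq_card_filter, Nat.card_eq_fintype_card,
    Fintype.card_subtype]
  calc #{i | O' i a b} ≤ #(({i | O i a b} : Finset V) ∪ ({i | O' i ≠ O i} : Finset V)) := by
        refine card_le_card fun i hi => ?_
        by_cases h : O' i = O i
        · simp_all
        · simp [h]
    _ ≤ _ := card_union_le _ _

theorem isCondorcetWinner_subtype_notMem_iff [DecidableEq V] (O : V → C → C → Prop)
    [∀ a b, DecidablePred (O · a b)] (D : Finset V) (c : C) :
    IsCondorcetWinner (fun i : {i // i ∉ D} => O i) c ↔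
      ∀ b, b ≠ c → Fintype.card V - #D < 2 * #(({i | O i c b} : Finset V) \ D) := by
  have hcard : Fintype.card {i // i ∉ D} = Fintype.card V - #D := by
    rw [Fintype.card_subtype_compl, Fintype.card_coe]
  have hcount (b : C) : countPref (fun i : {i // i ∉ D} => O i) c b =
      #(({i | O i c b} : Finset V) \ D) := by
    rw [countPref, Nat.card_congr (Equiv.subtypeSubtypeEquivSubtypeInter (· ∉ D) (O · c b)),
      Nat.card_eq_fintype_card, Fintype.card_subtype]
    congr 1
    ext i
    simp [and_comm]
  simp only [IsCondorcetWinner, hcard, hcount]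

end CondorcetWinner

instance (i : Fin 29) (x y : Fin 4) : Decidable (theProfile i x y) :=
  inferInstanceAs (Decidable (_ < _))

theorem isStrictTotalOrder_theProfile (i : Fin 29) : IsStrictTotalOrder (Fin 4) (theProfile i) :=
  have trichotomous : ∀ i x y, theProfile i x y ∨ x = y ∨ theProfile i y x := by decide
  { trichotomous := fun x y hxy hyx => ((trichotomous i x y).resolve_left hxy).resolve_right hyx
    irrefl := fun _ => Nat.lt_irrefl _
    trans := fun _ _ _ => Nat.lt_trans }

section Replacement

/-- One voter from each 8-voter bloc switches to the ballot `a ≻ b ≻ c ≻ d`. -/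
def replacedProfile (i : Fin 29) : Fin 4 → Fin 4 → Prop :=
  theProfile (if i ∈ ({5, 13, 21} : Finset (Fin 29)) then 0 else i)

instance (i : Fin 29) (x y : Fin 4) : Decidable (replacedProfile i x y) :=
  inferInstanceAs (Decidable (theProfile _ x y))

theorem card_replacedProfile_ne_le : Nat.card {i // replacedProfile i ≠ theProfile i} ≤ 3 := by
  have hsub : {i | replacedProfile i ≠ theProfile i} ⊆ ↑({5, 13, 21} : Finset (Fin 29)) := by
    intro i hi
    by_contra hi'
    exact hi (by rw [replacedProfile, if_neg (mt mem_coe.2 hi')])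
  calc Nat.card {i // replacedProfile i ≠ theProfile i}
      = {i | replacedProfile i ≠ theProfile i}.ncard := Nat.card_coe_set_eq _
    _ ≤ (↑({5, 13, 21} : Finset (Fin 29)) : Set (Fin 29)).ncard :=
        Set.ncard_le_ncard hsub (finite_toSet _)
    _ = 3 := by rw [Set.ncard_coe_finset]; rfl

theorem isCondorcetWinner_replacedProfile : IsCondorcetWinner replacedProfile 0 := by
  intro b hb
  rw [countPref_eq_card_filter]
  revert b
  decide

theorem replacementScoreLE_zero_three : ReplacementScoreLE 0 3 :=
  ⟨replacedProfile, fun _ => isStrictTotalOrder_theProfile _, card_replacedProfile_ne_le,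
    isCondorcetWinner_replacedProfile⟩

theorem not_replacementScoreLE_of_two_mul_le {x y : Fin 4} {k : ℕ} (hyx : y ≠ x)
    (hxy : 2 * (countPref theProfile x y + k) ≤ 29) : ¬ ReplacementScoreLE x k := by
  rintro ⟨O', -, hk, hwin⟩
  have hmajority := hwin y hyx
  have hchange := countPref_le_countPref_add_card_ne theProfile O' x y
  simp only [Fintype.card_fin] at hmajority
  omega

theorem not_replacementScoreLE_three {x : Fin 4} (hx : x ≠ 0) : ¬ ReplacementScoreLE x 3 := by
  have hrival : ∀ x : Fin 4, x ≠ 0 → ∃ y, y ≠ x ∧ 2 * (#{i | theProfile i x y} + 3) ≤ 29 := by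
    decide
  obtain ⟨y, hyx, hxy⟩ := hrival x hx
  exact not_replacementScoreLE_of_two_mul_le hyx (by rwa [countPref_eq_card_filter])

end Replacement

section Deletion

theorem winsAfterDeleting_iff (D : Finset (Fin 29)) (c : Fin 4) :
    WinsAfterDeleting D c ↔
      ∀ y, y ≠ c → 29 - #D < 2 * #(({i | theProfile i c y} : Finset (Fin 29)) \ D) := by
  rw [WinsAfterDeleting, isCondorcetWinner_subtype_notMem_iff, Fintype.card_fin]

theorem winsAfterDeleting_one : WinsAfterDeleting {i | 13 ≤ i.val ∧ i.val < 21} 1 := by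
  rw [winsAfterDeleting_iff]
  decide

theorem WinsAfterDeleting.sub_card_lt_two_mul_card_filter {D : Finset (Fin 29)} {c y : Fin 4}
    (hwin : WinsAfterDeleting D c) (hyc : y ≠ c) : 29 - #D < 2 * #{i | theProfile i c y} :=
  ((winsAfterDeleting_iff D c).1 hwin y hyc).trans_le
    (Nat.mul_le_mul_left 2 (card_le_card sdiff_subset))

theorem not_winsAfterDeleting_one {D : Finset (Fin 29)} (hD : #D ≤ 7) :
    ¬ WinsAfterDeleting D 1 := by
  intro hwin
  have hbd := hwin.sub_card_lt_two_mul_card_filter (y := 3) (by decide)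
  have h11 : #{i | theProfile i 1 3} = 11 := by decide
  omega

theorem not_winsAfterDeleting_zero {D : Finset (Fin 29)} (hD : #D ≤ 11) :
    ¬ WinsAfterDeleting D 0 := by
  intro hwin
  set P : Fin 4 → Finset (Fin 29) := fun y => {i | theProfile i 0 y}
  have hP : ∀ y, y ≠ 0 → #(P y) = 13 := by decide
  have hcover : ∀ i, i ∈ P 1 ∪ P 2 ∪ P 3 := by decide
  have hD_le : #D ≤ #(P 1 ∩ D) + #(P 2 ∩ D) + #(P 3 ∩ D) :=
    calc #D = #((P 1 ∪ P 2 ∪ P 3) ∩ D) := by rw [inter_eq_right.2 fun i _ => hcover i]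
      _ ≤ _ := by
        rw [union_inter_distrib_right, union_inter_distrib_right]
        exact (card_union_le _ _).trans (Nat.add_le_add_right (card_union_le _ _) _)
  have hmajority (y : Fin 4) (hy : y ≠ 0) : 29 - #D < 2 * (13 - #(P y ∩ D)) := by
    have hwin_y : 29 - #D < 2 * #(P y \ D) := (winsAfterDeleting_iff D 0).1 hwin y hy
    have hsplit := card_sdiff_add_card_inter (P y) D
    have hPy := hP y hy
    omega
  have h1 := hmajority 1 (by decide)
  have h2 := hmajority 2 (by decide)
  have h3 := hmajority 3 (by decide)
  omega

end Deletion

/-- in this election the voter replacement rule and Young's rule declare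
different winners: `a` (candidate 0) is the unique replacement winner (replacement
score 3, all others at least 4), while `b` (candidate 1) has deletion score 8 and `a`
has deletion score at least 12, so `a` is not a Young winner. -/
theorem stmt14 :
    ReplacementScoreLE 0 3 ∧
    (∀ x : Fin 4, x ≠ 0 → ¬ ReplacementScoreLE x 3) ∧
    (∃ D : Finset (Fin 29), D.card = 8 ∧ WinsAfterDeleting D 1) ∧
    (∀ D : Finset (Fin 29), D.card ≤ 7 → ¬ WinsAfterDeleting D 1) ∧
    (∀ D : Finset (Fin 29), D.card ≤ 11 → ¬ WinsAfterDeleting D 0) :=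
  ⟨replacementScoreLE_zero_three, fun _ => not_replacementScoreLE_three,
    ⟨_, by decide, winsAfterDeleting_one⟩, fun _ => not_winsAfterDeleting_one,
    fun _ => not_winsAfterDeleting_zero⟩
end

section
/- In the 29-voter election over {a,b,c,d} with 2 voters a≻b≻c≻d, 2 voters a≻c≻d≻b, 1 voter a≻b≻d≻c, 8 voters b≻c≻a≻d, 8 voters c≻d≻a≻b, and 8 voters d≻b≻a≻c, the replacement score of candidate a is at most 3: replacing one b-voter, one c-voter, and one d-voter with voters who rank a first makes a the Condorcet winner. -/
section BallotOrder

variable {α : Type*} [DecidableEq α]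

def ballotOrder (l : List α) (x y : α) : Prop :=
  l.idxOf x < l.idxOf y

instance (l : List α) : DecidableRel (ballotOrder l) :=
  fun _ _ => inferInstanceAs (Decidable (_ < _))

theorem isStrictTotalOrder_ballotOrder {l : List α} (hl : ∀ x, x ∈ l) :
    IsStrictTotalOrder α (ballotOrder l) where
  trichotomous x _ hxy hyx := (List.idxOf_inj (hl x)).1 (le_antisymm (not_lt.1 hyx) (not_lt.1 hxy))
  irrefl x := lt_irrefl (l.idxOf x)
  trans _ _ _ := lt_trans

end BallotOrder

def replacedVoters : Finset (Fin 29) := {5, 13, 21}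

def newBallot (i : Fin 29) : List (Fin 4) :=
  if i ∈ replacedVoters then [0, 1, 2, 3] else theBallot i

theorem newBallot_of_mem {i : Fin 29} (hi : i ∈ replacedVoters) : newBallot i = [0, 1, 2, 3] :=
  if_pos hi

theorem newBallot_of_notMem {i : Fin 29} (hi : i ∉ replacedVoters) : newBallot i = theBallot i :=
  if_neg hi

def newProfile (i : Fin 29) : Fin 4 → Fin 4 → Prop :=
  ballotOrder (newBallot i)

instance (i : Fin 29) : DecidableRel (newProfile i) :=
  inferInstanceAs (DecidableRel (ballotOrder _))

theorem mem_newBallot (i : Fin 29) (x : Fin 4) : x ∈ newBallot i := by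
  revert i x; decide +kernel

theorem countPref_newProfile_zero (y : Fin 4) (hy : y ≠ 0) : countPref newProfile 0 y = 15 := by
  rw [countPref, Nat.card_eq_fintype_card]
  revert y; decide +kernel

/-- the replacement score of candidate `a` (candidate 0) is at most 3:
replacing one b-voter (voter 5), one c-voter (voter 13) and one d-voter (voter 21)
with voters who rank `a` first makes `a` the Condorcet winner. -/
theorem stmt15 :
    ∃ O' : Fin 29 → Fin 4 → Fin 4 → Prop,
      (∀ i, IsStrictTotalOrder (Fin 4) (O' i)) ∧
      (∀ i : Fin 29, i ∉ ({5, 13, 21} : Finset (Fin 29)) → O' i = theProfile i) ∧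
      (∀ i ∈ ({5, 13, 21} : Finset (Fin 29)), ∀ y : Fin 4, y ≠ 0 → O' i 0 y) ∧
      IsCondorcetWinner O' 0 := by
  refine ⟨newProfile, fun i => isStrictTotalOrder_ballotOrder (mem_newBallot i), ?_, ?_, ?_⟩
  · exact fun i hi => congrArg ballotOrder (newBallot_of_notMem hi)
  · intro i hi
    rw [newProfile, newBallot_of_mem hi]
    decide
  · intro y hy
    rw [countPref_newProfile_zero y hy]
    decide
end

section
/- In the 29-voter election over {a,b,c,d} with 2 voters a≻b≻c≻d, 2 voters a≻c≻d≻b, 1 voter a≻b≻d≻c, 8 voters b≻c≻a≻d, 8 voters c≻d≻a≻b, and 8 voters d≻b≻a≻c, the deletion score of candidate a is at least 12: no set of at most 11 voters can be deleted so that a becomes the Condorcet winner of the remaining election. -/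
/-!
Every voter ranks `a` above at least one of `b`, `c`, `d`, and each of the three pairwise
contests starts at 13 : 16 against `a`. Deleting a set `D` of voters, `a` beats `x` only if
`D` contains at most `(#D - 4) / 2` of the 13 voters preferring `a` to `x`. Since these three
sets of supporters cover `D`, summing gives `#D ≤ 3 (#D - 4) / 2`, that is `#D ≥ 12`.
-/

open Finset

section Deletion

variable {V C : Type*} [Fintype V] [DecidableEq V]
  (O : V → C → C → Prop) [∀ i x y, Decidable (O i x y)]

def supporters (x y : C) : Finset V := {i | O i x y}

lemma countPref_subtype_not_mem (D : Finset V) (x y : C) :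
    countPref (fun i : {i // i ∉ D} => O i.1) x y = #(supporters O x y \ D) := by
  rw [countPref, Nat.card_congr (Equiv.subtypeSubtypeEquivSubtypeInter (· ∉ D) (O · x y)),
    Nat.card_eq_fintype_card, Fintype.card_subtype]
  congr 1
  ext i
  simp [supporters, and_comm]

variable {O}

lemma card_add_two_mul_card_supporters_inter_lt {D : Finset V} {c b : C}
    (hwin : IsCondorcetWinner (fun i : {i // i ∉ D} => O i.1) c) (hb : b ≠ c) :
    Fintype.card V + 2 * #(supporters O c b ∩ D) < #D + 2 * #(supporters O c b) := by
  have hmaj := hwin b hb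
  rw [countPref_subtype_not_mem, Fintype.card_subtype_compl, Fintype.card_coe] at hmaj
  have hsplit := card_sdiff_add_card_inter (supporters O c b) D
  have hD := card_le_univ D
  omega

variable (O)

lemma card_le_sum_card_supporters_inter (D : Finset V) (c : C) (B : Finset C)
    (hcover : ∀ i, ∃ b ∈ B, O i c b) :
    #D ≤ ∑ b ∈ B, #(supporters O c b ∩ D) := by
  refine (card_le_card fun i hi => ?_).trans card_biUnion_le
  obtain ⟨b, hb, hib⟩ := hcover i
  exact mem_biUnion.2 ⟨b, hb, by simp [supporters, hib, hi]⟩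

end Deletion

lemma card_supporters_theProfile_zero :
    ∀ b : Fin 4, b ≠ 0 → #(supporters theProfile 0 b) = 13 := by
  decide

lemma theProfile_zero_not_last :
    ∀ i : Fin 29, ∃ b ∈ ({1, 2, 3} : Finset (Fin 4)), theProfile i 0 b := by
  decide

/-- the deletion score of candidate `a` (candidate 0) is at least 12: no
set of at most 11 voters can be deleted so that `a` becomes the Condorcet winner. -/
theorem stmt17 :
    ∀ D : Finset (Fin 29), D.card ≤ 11 → ¬ WinsAfterDeleting D 0 := by
  intro D hD hwin
  have hmargin (b : Fin 4) (hb : b ≠ 0) : 3 + 2 * #(supporters theProfile 0 b ∩ D) < #D := by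
    have := card_add_two_mul_card_supporters_inter_lt hwin hb
    rw [card_supporters_theProfile_zero b hb, Fintype.card_fin] at this
    omega
  have hcover := card_le_sum_card_supporters_inter theProfile D 0 _ theProfile_zero_not_last
  rw [sum_insert (by decide), sum_insert (by decide), sum_singleton] at hcover
  have h1 := hmargin 1 (by decide)
  have h2 := hmargin 2 (by decide)
  have h3 := hmargin 3 (by decide)
  omega
end
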